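/- arXiv:1905.05935 — 2 statements merged into one kernel-verified Lean document; each statement's English description precedes it below -/
import Mathlib

section
/- Let y ∈ ℝ^k, let C be a p×k real matrix with CC' invertible, and let a ∈ ℝ^p be such that the affine subspace {M ∈ ℝ^k : C M = a} is nonempty. Then the minimum of ‖M − y‖² over all M with C M = a equals (a − C y)'(C C')⁻¹(a − C y). -/
/-! The constraint set is `y + u₀ + ker C` with `u₀ = Cᵀ (C Cᵀ)⁻¹ (a - C y)`. Since `u₀` lies in the
range of `Cᵀ`, it is orthogonal to `ker C`, so by Pythagoras `y + u₀` is the closest feasible point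
to `y`, at squared distance `u₀ ⬝ u₀ = (C u₀) ⬝ (C Cᵀ)⁻¹ (a - C y) = (a - C y) ⬝ (C Cᵀ)⁻¹ (a - C y)`. -/

open Matrix

theorem isLeast_norm_sub_sq_of_inner_eq_zero {F : Type*} [NormedAddCommGroup F]
    [InnerProductSpace ℝ F] {S : Set F} {x₀ y : F} (hx₀ : x₀ ∈ S)
    (horth : ∀ x ∈ S, inner ℝ (x - x₀) (x₀ - y) = 0) :
    IsLeast {d | ∃ x ∈ S, d = ‖x - y‖ ^ 2} (‖x₀ - y‖ ^ 2) := by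
  refine ⟨⟨x₀, hx₀, rfl⟩, ?_⟩
  rintro d ⟨x, hx, rfl⟩
  calc ‖x₀ - y‖ ^ 2 ≤ ‖x - x₀‖ ^ 2 + ‖x₀ - y‖ ^ 2 := le_add_of_nonneg_left (sq_nonneg _)
    _ = ‖x - x₀ + (x₀ - y)‖ ^ 2 := by
      simp only [sq, norm_add_sq_eq_norm_sq_add_norm_sq_real (horth x hx)]
    _ = ‖x - y‖ ^ 2 := by rw [sub_add_sub_cancel]

section MinNormSolution

variable {m n : Type*} [Fintype m] [Fintype n] [DecidableEq m]

/-- The solution of `C u = b` of least Euclidean norm, when `C` has full row rank. -/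
noncomputable def minNormSolution (C : Matrix m n ℝ) (b : m → ℝ) : n → ℝ :=
  Cᵀ *ᵥ (C * Cᵀ)⁻¹ *ᵥ b

variable {C : Matrix m n ℝ}

theorem mulVec_minNormSolution (hC : IsUnit (C * Cᵀ)) (b : m → ℝ) :
    C *ᵥ minNormSolution C b = b := by
  rw [minNormSolution, mulVec_mulVec, mulVec_mulVec,
    mul_nonsing_inv _ ((isUnit_iff_isUnit_det _).mp hC), one_mulVec]

theorem dotProduct_minNormSolution (u : n → ℝ) (b : m → ℝ) :
    u ⬝ᵥ minNormSolution C b = C *ᵥ u ⬝ᵥ (C * Cᵀ)⁻¹ *ᵥ b := by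
  rw [minNormSolution, dotProduct_transpose_mulVec, dotProduct_comm]

theorem minNormSolution_dotProduct_self (hC : IsUnit (C * Cᵀ)) (b : m → ℝ) :
    minNormSolution C b ⬝ᵥ minNormSolution C b = b ⬝ᵥ (C * Cᵀ)⁻¹ *ᵥ b := by
  rw [dotProduct_minNormSolution, mulVec_minNormSolution hC]

end MinNormSolution

theorem stmt_0_general {k p : ℕ} (C : Matrix (Fin p) (Fin k) ℝ)
    (hC : IsUnit (C * Cᵀ)) (y : EuclideanSpace ℝ (Fin k)) (a : Fin p → ℝ) :
    IsLeast {d : ℝ | ∃ M : EuclideanSpace ℝ (Fin k), C.mulVec M = a ∧ d = ‖M - y‖ ^ 2}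
      ((a - C.mulVec y) ⬝ᵥ (C * Cᵀ)⁻¹.mulVec (a - C.mulVec y)) := by
  set u := minNormSolution C (a - C *ᵥ y)
  set M₀ : EuclideanSpace ℝ (Fin k) := y + WithLp.toLp 2 u
  have hM₀ : C *ᵥ M₀ = a := by
    simp only [M₀, u, WithLp.ofLp_add, mulVec_add, mulVec_minNormSolution hC, add_sub_cancel]
  have hdist : ‖M₀ - y‖ ^ 2 = (a - C *ᵥ y) ⬝ᵥ (C * Cᵀ)⁻¹ *ᵥ (a - C *ᵥ y) := by
    rw [add_sub_cancel_left, ← real_inner_self_eq_norm_sq, EuclideanSpace.inner_toLp_toLp,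
      star_trivial, minNormSolution_dotProduct_self hC]
  rw [← hdist]
  refine isLeast_norm_sub_sq_of_inner_eq_zero
    (S := {M : EuclideanSpace ℝ (Fin k) | C *ᵥ M = a}) hM₀ fun M (hM : C *ᵥ M.ofLp = a) => ?_
  have hker : C *ᵥ (M - M₀).ofLp = 0 := by rw [WithLp.ofLp_sub, mulVec_sub, hM, hM₀, sub_self]
  rw [add_sub_cancel_left, EuclideanSpace.inner_eq_star_dotProduct, star_trivial, dotProduct_comm,
    dotProduct_minNormSolution, hker, zero_dotProduct]

/-- the minimum of ‖M − y‖² over {M : C M = a} equals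
(a − C y)ᵀ (C Cᵀ)⁻¹ (a − C y). -/
theorem stmt_0 {k p : ℕ} (C : Matrix (Fin p) (Fin k) ℝ)
    (hC : IsUnit (C * Cᵀ)) (y : EuclideanSpace ℝ (Fin k)) (a : Fin p → ℝ)
    (hne : ∃ M : EuclideanSpace ℝ (Fin k), C.mulVec M = a) :
    IsLeast {d : ℝ | ∃ M : EuclideanSpace ℝ (Fin k), C.mulVec M = a ∧ d = ‖M - y‖ ^ 2}
      ((a - C.mulVec y) ⬝ᵥ (C * Cᵀ)⁻¹.mulVec (a - C.mulVec y)) :=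
  stmt_0_general C hC y a
end

section
/- For each k ≥ 2, let T_k ~ χ²_{k−1} and let F_k denote the CDF of the χ²_k distribution. Then F_k(T_k) converges in distribution to the Uniform(0,1) distribution as k → ∞. -/
/-!
`F_{k-1}(T_k)` is exactly uniform on `[0, 1]` (probability integral transform for the continuous
cdf `F_{k-1}`), and a bounded continuous `f` is uniformly continuous on `[0, 1]`, so it suffices
that `sup_x |F_k(x) - F_{k-1}(x)| → 0`. With `a = (k-1)/2` these are the cdfs of `Γ(a + 1/2, 1/2)`
and `Γ(a, 1/2)`. Gamma cdfs decrease in the shape parameter (the density ratio is a power of `t`,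
so the densities cross once), hence the difference is at most `F_a - F_{a+1}`, which by the
fundamental theorem of calculus equals `(rx)^a e^{-rx} / Γ(a+1) ≤ a^a e^{-a} / Γ(a+1)`. Finally
`Γ(a+1) ≥ ∫_a^{a+√a} t^a e^{-t} dt ≥ √a a^a e^{-a} / e`, so the difference is at most `e / √a`.
-/

open MeasureTheory ProbabilityTheory

/-- The chi-squared distribution with k degrees of freedom, as a Gamma(k/2, 1/2) measure. -/
noncomputable def chiSquared (k : ℕ) : Measure ℝ :=
  ProbabilityTheory.gammaMeasure ((k : ℝ) / 2) (1 / 2)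

open Real Set Filter Topology BoundedContinuousFunction

lemma IsClosed.eq_Iic_csSup {α : Type*} [ConditionallyCompleteLinearOrder α] [TopologicalSpace α]
    [OrderTopology α] {s : Set α} (hs : IsClosed s) (hlow : IsLowerSet s) (hne : s.Nonempty)
    (hbdd : BddAbove s) : s = Iic (sSup s) :=
  Subset.antisymm (fun _ hx => le_csSup hbdd hx) fun _ hx => hlow hx (hs.csSup_mem hne hbdd)

namespace ProbabilityTheory

variable (μ : Measure ℝ) [IsProbabilityMeasure μ]

theorem continuous_cdf [NullSingletonClass μ] : Continuous (cdf μ) := by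
  refine continuous_iff_continuousAt.2 fun x => ?_
  rw [(monotone_cdf μ).continuousAt_iff_leftLim_eq_rightLim, StieltjesFunction.rightLim_eq]
  have h := (cdf μ).measure_singleton x
  rw [measure_cdf, measure_singleton, eq_comm, ENNReal.ofReal_eq_zero, sub_nonpos] at h
  exact le_antisymm ((monotone_cdf μ).leftLim_le le_rfl) h

lemma measure_preimage_cdf_Iic [NullSingletonClass μ] {y : ℝ} (hy0 : 0 ≤ y) (hy1 : y < 1) :
    μ (cdf μ ⁻¹' Iic y) = ENNReal.ofReal y := by
  set S := cdf μ ⁻¹' Iic y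
  rcases S.eq_empty_or_nonempty with hS | hS
  · obtain rfl : y = 0 := by
      refine le_antisymm (not_lt.1 fun hy => ?_) hy0
      obtain ⟨x, hx⟩ := ((tendsto_cdf_atBot μ).eventually_lt_const hy).exists
      exact hS.subset (show x ∈ S from hx.le)
    simp [hS]
  have hbdd : BddAbove S := by
    obtain ⟨x₀, hx₀⟩ := ((tendsto_cdf_atTop μ).eventually_const_lt hy1).exists
    exact ⟨x₀, fun x hx => not_lt.1 fun h => (hx₀.trans_le (monotone_cdf μ h.le)).not_ge hx⟩
  have hclosed : IsClosed S := isClosed_Iic.preimage (continuous_cdf μ)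
  have hS_eq := hclosed.eq_Iic_csSup (fun _ _ hab hb => (monotone_cdf μ hab).trans hb) hS hbdd
  -- `cdf μ` exceeds `y` to the right of `sSup S`, hence equals `y` there by continuity.
  have hsup : cdf μ (sSup S) = y := by
    refine le_antisymm (hclosed.csSup_mem hS hbdd) ?_
    have hright : Ioi (sSup S) ⊆ {x | y < cdf μ x} := fun x hx =>
      show y < cdf μ x from not_le.1 fun h => (le_csSup hbdd h).not_gt hx
    refine closure_lt_subset_le continuous_const (continuous_cdf μ) (closure_mono hright ?_)
    rw [closure_Ioi]
    exact self_mem_Ici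
  rw [hS_eq, ← ofReal_cdf, hsup]

theorem map_cdf_eq_volume_restrict_Icc [NullSingletonClass μ] :
    μ.map (cdf μ) = volume.restrict (Icc 0 1) := by
  have hmeas : Measurable (cdf μ) := (monotone_cdf μ).measurable
  have := Measure.isProbabilityMeasure_map (μ := μ) hmeas.aemeasurable
  refine Measure.ext_of_Iic _ _ fun y => ?_
  rw [Measure.map_apply hmeas measurableSet_Iic, Measure.restrict_apply measurableSet_Iic]
  rcases lt_or_ge y 0 with hy0 | hy0
  · have hpre : cdf μ ⁻¹' Iic y = ∅ :=
      eq_empty_of_forall_notMem fun x hx => (hy0.trans_le (cdf_nonneg μ x)).not_ge hx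
    have hIcc : Iic y ∩ Icc 0 1 = ∅ :=
      eq_empty_of_forall_notMem fun x hx => (hy0.trans_le hx.2.1).not_ge hx.1
    simp [hpre, hIcc]
  rcases lt_or_ge y 1 with hy1 | hy1
  · have hIcc : Iic y ∩ Icc 0 1 = Icc 0 y := by
      ext x
      simp only [mem_inter_iff, mem_Iic, mem_Icc]
      grind
    rw [measure_preimage_cdf_Iic μ hy0 hy1, hIcc, volume_Icc, sub_zero]
  · have hpre : cdf μ ⁻¹' Iic y = univ :=
      eq_univ_of_forall fun x => (cdf_le_one μ x).trans hy1
    rw [hpre, inter_eq_right.2 fun x hx => hx.2.trans hy1]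
    simp

end ProbabilityTheory

theorem tendsto_integral_map_sub_integral_map_of_dist_le {ι α β : Type*} [MeasurableSpace α]
    [PseudoMetricSpace β] [MeasurableSpace β] [OpensMeasurableSpace β] {l : Filter ι}
    {μ : ι → Measure α} [∀ i, IsProbabilityMeasure (μ i)] {F G : ι → α → β} {K : Set β}
    (hK : IsCompact K) (hF : ∀ i, Measurable (F i)) (hG : ∀ i, Measurable (G i))
    (hFK : ∀ i x, F i x ∈ K) (hGK : ∀ i x, G i x ∈ K) {δ : ι → ℝ} (hδ : Tendsto δ l (𝓝 0))
    (hFG : ∀ i x, dist (F i x) (G i x) ≤ δ i) (f : β →ᵇ ℝ) :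
    Tendsto (fun i => ∫ y, f y ∂(μ i).map (F i) - ∫ y, f y ∂(μ i).map (G i)) l (𝓝 0) := by
  rw [Metric.tendsto_nhds]
  intro ε hε
  obtain ⟨η, hη, hf⟩ := Metric.uniformContinuousOn_iff.1
    (hK.uniformContinuousOn_of_continuous f.continuous.continuousOn) (ε / 2) (half_pos hε)
  filter_upwards [hδ.eventually (gt_mem_nhds hη)] with i hi
  have hint : ∀ H : α → β, Measurable H → Integrable (fun x => f (H x)) (μ i) := fun H hH =>
    (integrable_map_measure f.continuous.aestronglyMeasurable hH.aemeasurable).1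
      (f.integrable _)
  have hclose : ∀ x, ‖f (F i x) - f (G i x)‖ ≤ ε / 2 := fun x =>
    (hf _ (hFK i x) _ (hGK i x) ((hFG i x).trans_lt hi)).le
  rw [dist_zero_right, integral_map (hF i).aemeasurable f.continuous.aestronglyMeasurable,
    integral_map (hG i).aemeasurable f.continuous.aestronglyMeasurable,
    ← integral_sub (hint _ (hF i)) (hint _ (hG i))]
  calc ‖∫ x, f (F i x) - f (G i x) ∂μ i‖ ≤ ε / 2 := by
        simpa using norm_integral_le_of_norm_le_const (μ := μ i) (ae_of_all _ hclose)
    _ < ε := half_lt_self hε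

namespace Real

variable {a : ℝ}

lemma rpow_mul_exp_neg_eq {y : ℝ} (hy : 0 < y) : y ^ a * exp (-y) = exp (a * log y - y) := by
  rw [rpow_def_of_pos hy, ← exp_add, mul_comm, sub_eq_add_neg]

lemma rpow_mul_exp_neg_le (ha : 0 < a) {y : ℝ} (hy : 0 ≤ y) :
    y ^ a * exp (-y) ≤ a ^ a * exp (-a) := by
  rcases hy.eq_or_lt with rfl | hy
  · rw [zero_rpow ha.ne', zero_mul]
    positivity
  rw [rpow_mul_exp_neg_eq hy, rpow_mul_exp_neg_eq ha, exp_le_exp]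
  have hlog := log_le_sub_one_of_pos (div_pos hy ha)
  rw [log_div hy.ne' ha.ne'] at hlog
  have := mul_le_mul_of_nonneg_left hlog ha.le
  rw [mul_sub_one, mul_div_cancel₀ y ha.ne'] at this
  linarith

lemma antitoneOn_rpow_mul_exp_neg (ha : 0 < a) : AntitoneOn (fun y => y ^ a * exp (-y)) (Ici a) := by
  intro s hs t _ hst
  have hs0 : 0 < s := ha.trans_le hs
  dsimp only
  rw [rpow_mul_exp_neg_eq (hs0.trans_le hst), rpow_mul_exp_neg_eq hs0, exp_le_exp]
  have hlog := log_le_sub_one_of_pos (div_pos (hs0.trans_le hst) hs0)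
  rw [log_div (hs0.trans_le hst).ne' hs0.ne'] at hlog
  have hratio : a * (t / s - 1) ≤ s * (t / s - 1) :=
    mul_le_mul_of_nonneg_right hs (sub_nonneg.2 ((one_le_div hs0).2 hst))
  have hcancel : s * (t / s - 1) = t - s := by field_simp
  linarith [mul_le_mul_of_nonneg_left hlog ha.le]

lemma rpow_mul_exp_neg_div_exp_one_le (ha : 0 < a) :
    a ^ a * exp (-a) / exp 1 ≤ (a + √a) ^ a * exp (-(a + √a)) := by
  have hu : 0 < √a := sqrt_pos.2 ha
  have hau : 0 < a + √a := by positivity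
  rw [rpow_mul_exp_neg_eq ha, rpow_mul_exp_neg_eq hau, ← exp_sub, exp_le_exp]
  have hlog := one_sub_inv_le_log_of_pos (div_pos hau ha)
  rw [log_div hau.ne' ha.ne', inv_div] at hlog
  -- `a (1 - a/(a+√a)) - √a = -a/(a+√a) ≥ -1`
  have hkey : √a - 1 ≤ a * (1 - a / (a + √a)) := by
    rw [one_sub_div hau.ne', add_sub_cancel_left, mul_div_assoc', le_div_iff₀ hau]
    nlinarith [sq_sqrt ha.le]
  nlinarith

lemma sqrt_mul_rpow_mul_exp_neg_div_exp_one_le_Gamma_add_one (ha : 0 < a) :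
    √a * (a ^ a * exp (-a) / exp 1) ≤ Gamma (a + 1) := by
  have hint := GammaIntegral_convergent (show 0 < a + 1 by linarith)
  rw [add_sub_cancel_right] at hint
  rw [Gamma_eq_integral (by linarith), add_sub_cancel_right]
  set u := √a
  have hu : 0 ≤ u := sqrt_nonneg a
  have hsub : Ioc a (a + u) ⊆ Ioi 0 := fun t ht => ha.trans ht.1
  -- On `(a, a + √a]` the integrand is at least its value at the right end point.
  have hslab : u * (exp (-(a + u)) * (a + u) ^ a) ≤ ∫ t in Ioc a (a + u), exp (-t) * t ^ a := by
    have h := setIntegral_ge_of_const_le (c := exp (-(a + u)) * (a + u) ^ a) measurableSet_Ioc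
      measure_Ioc_lt_top.ne (fun t ht => by
        rw [mul_comm, mul_comm (exp (-t))]
        exact antitoneOn_rpow_mul_exp_neg ha (mem_Ici.2 ht.1.le) (mem_Ici.2 (by linarith)) ht.2)
      (hint.mono_set hsub)
    rwa [measureReal_def, volume_Ioc, ENNReal.toReal_ofReal (by linarith), add_sub_cancel_left,
      smul_eq_mul] at h
  have hmono : ∫ t in Ioc a (a + u), exp (-t) * t ^ a ≤ ∫ t in Ioi 0, exp (-t) * t ^ a :=
    setIntegral_mono_set hint (ae_restrict_of_forall_mem measurableSet_Ioi fun t (ht : 0 < t) =>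
      by positivity) (Eventually.of_forall hsub)
  calc √a * (a ^ a * exp (-a) / exp 1) ≤ u * (exp (-(a + u)) * (a + u) ^ a) := by
        rw [mul_comm (exp _)]
        exact mul_le_mul_of_nonneg_left (rpow_mul_exp_neg_div_exp_one_le ha) hu
    _ ≤ _ := hslab.trans hmono

lemma rpow_mul_exp_neg_div_Gamma_add_one_le (ha : 0 < a) :
    a ^ a * exp (-a) / Gamma (a + 1) ≤ exp 1 / √a := by
  have hG := sqrt_mul_rpow_mul_exp_neg_div_exp_one_le_Gamma_add_one ha
  have := Gamma_pos_of_pos (show 0 < a + 1 by linarith)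
  have := sqrt_pos.2 ha
  rw [div_le_div_iff₀ (by positivity) (by positivity)]
  rw [mul_div_assoc', div_le_iff₀ (exp_pos 1)] at hG
  linarith

end Real

lemma setIntegral_Iic_le_of_crossing {p q : ℝ → ℝ} (hp : Integrable p) (hq : Integrable q)
    (h_int : ∫ t, q t = ∫ t, p t) (t₀ : ℝ) (h_le : ∀ᵐ t, t ≤ t₀ → q t ≤ p t)
    (h_ge : ∀ᵐ t, t₀ < t → p t ≤ q t) (x : ℝ) :
    ∫ t in Iic x, q t ≤ ∫ t in Iic x, p t := by
  rcases le_or_gt x t₀ with hx | hx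
  · refine setIntegral_mono_on_ae hq.integrableOn hp.integrableOn measurableSet_Iic ?_
    filter_upwards [h_le] with t ht htx using ht (le_trans htx hx)
  · have h_tail : ∫ t in Ioi x, p t ≤ ∫ t in Ioi x, q t := by
      refine setIntegral_mono_on_ae hp.integrableOn hq.integrableOn measurableSet_Ioi ?_
      filter_upwards [h_ge] with t ht htx using ht (hx.trans htx)
    have hp_split := integral_add_compl (measurableSet_Iic (a := x)) hp
    have hq_split := integral_add_compl (measurableSet_Iic (a := x)) hq
    rw [compl_Iic] at hp_split hq_split
    linarith

namespace ProbabilityTheory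

variable {a b r : ℝ}

lemma integrable_gammaPDFReal (ha : 0 < a) (hr : 0 < r) : Integrable (gammaPDFReal a r) := by
  refine ⟨(measurable_gammaPDFReal a r).aestronglyMeasurable, ?_⟩
  rw [hasFiniteIntegral_iff_ofReal (ae_of_all _ (gammaPDFReal_nonneg ha hr))]
  exact (lintegral_gammaPDF_eq_one ha hr).trans_lt ENNReal.one_lt_top

lemma integral_gammaPDFReal (ha : 0 < a) (hr : 0 < r) : ∫ x, gammaPDFReal a r x = 1 := by
  rw [integral_eq_lintegral_of_nonneg_ae (ae_of_all _ (gammaPDFReal_nonneg ha hr))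
    (measurable_gammaPDFReal a r).aestronglyMeasurable]
  exact congrArg ENNReal.toReal (lintegral_gammaPDF_eq_one ha hr) |>.trans ENNReal.toReal_one

instance nullSingletonClass_gammaMeasure (a r : ℝ) : NullSingletonClass (gammaMeasure a r) := by
  unfold gammaMeasure
  infer_instance

lemma cdf_gammaMeasure_of_nonpos (ha : 0 < a) (hr : 0 < r) {x : ℝ} (hx : x ≤ 0) :
    cdf (gammaMeasure a r) x = 0 := by
  have := isProbabilityMeasure_gammaMeasure ha hr
  rw [cdf_eq_real, measureReal_def, ← measure_congr Iio_ae_eq_Iic, gammaMeasure,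
    withDensity_apply _ measurableSet_Iio, lintegral_gammaPDF_of_nonpos hx, ENNReal.toReal_zero]

lemma cdf_gammaMeasure_eq_intervalIntegral (ha : 0 < a) (hr : 0 < r) (x : ℝ) :
    cdf (gammaMeasure a r) x = ∫ t in 0..x, gammaPDFReal a r t := by
  have hint := integrable_gammaPDFReal ha hr
  rw [← intervalIntegral.integral_Iic_sub_Iic hint.integrableOn hint.integrableOn,
    ← cdf_gammaMeasure_eq_integral ha hr, ← cdf_gammaMeasure_eq_integral ha hr,
    cdf_gammaMeasure_of_nonpos ha hr le_rfl, sub_zero]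

lemma gammaPDFReal_eq_mul (ha : 0 < a) (hb : 0 < b) (hr : 0 < r) {t : ℝ} (ht : 0 < t) :
    gammaPDFReal b r t = r ^ (b - a) * Gamma a / Gamma b * t ^ (b - a) * gammaPDFReal a r t := by
  have := Gamma_pos_of_pos ha
  have := Gamma_pos_of_pos hb
  simp only [gammaPDFReal, if_pos ht.le]
  have hr_pow : r ^ b = r ^ (b - a) * r ^ a := by rw [← rpow_add hr, sub_add_cancel]
  have ht_pow : t ^ (b - 1) = t ^ (b - a) * t ^ (a - 1) := by rw [← rpow_add ht]; ring_nf
  rw [hr_pow, ht_pow]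
  field_simp

lemma cdf_gammaMeasure_le_of_le (ha : 0 < a) (hab : a ≤ b) (hr : 0 < r) (x : ℝ) :
    cdf (gammaMeasure b r) x ≤ cdf (gammaMeasure a r) x := by
  rcases hab.eq_or_lt with rfl | hab
  · rfl
  have hb := ha.trans hab
  set K := r ^ (b - a) * Gamma a / Gamma b
  have hK : 0 < K := by have := Gamma_pos_of_pos ha; have := Gamma_pos_of_pos hb; positivity
  set t₀ := K⁻¹ ^ (b - a)⁻¹
  have ht₀ : 0 < t₀ := by positivity
  -- the density ratio `K t^(b-a)` of the two laws crosses `1` exactly at `t₀`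
  have hcross : ∀ t, 0 < t → (K * t ^ (b - a) ≤ 1 ↔ t ≤ t₀) := fun t ht => by
    rw [← le_div_iff₀' hK, one_div, le_rpow_inv_iff_of_pos ht.le (by positivity) (sub_pos.2 hab)]
  rw [cdf_gammaMeasure_eq_integral hb hr, cdf_gammaMeasure_eq_integral ha hr]
  refine setIntegral_Iic_le_of_crossing (integrable_gammaPDFReal ha hr)
    (integrable_gammaPDFReal hb hr) (by rw [integral_gammaPDFReal ha hr, integral_gammaPDFReal hb hr])
    t₀ ?_ ?_ x
  · have hne : ∀ᵐ t : ℝ, t ≠ 0 := by simp [ae_iff, measure_singleton]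
    filter_upwards [hne] with t ht0 htt₀
    rcases ht0.lt_or_gt with htneg | htpos
    · simp [gammaPDFReal, not_le.2 htneg]
    · rw [gammaPDFReal_eq_mul ha hb hr htpos]
      exact mul_le_of_le_one_left (gammaPDFReal_nonneg ha hr t) ((hcross t htpos).2 htt₀)
  · filter_upwards with t htt₀
    have htpos := ht₀.trans htt₀
    rw [gammaPDFReal_eq_mul ha hb hr htpos]
    exact le_mul_of_one_le_left (gammaPDFReal_nonneg ha hr t)
      (not_le.1 (mt (hcross t htpos).1 (not_le.2 htt₀))).le

lemma hasDerivAt_rpow_mul_exp_neg_div_Gamma (ha : 0 < a) (hr : 0 < r) {t : ℝ} (ht : 0 < t) :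
    HasDerivAt (fun s => (r * s) ^ a * exp (-(r * s)) / Gamma (a + 1))
      (gammaPDFReal a r t - gammaPDFReal (a + 1) r t) t := by
  have hrt : 0 < r * t := mul_pos hr ht
  have hlin : HasDerivAt (fun s => r * s) r t := by simpa using (hasDerivAt_id t).const_mul r
  have hpow := (hasDerivAt_rpow_const (p := a) (Or.inl hrt.ne')).comp t hlin
  have hexp := (hasDerivAt_exp _).comp t hlin.neg
  refine ((hpow.mul hexp).div_const (Gamma (a + 1))).congr_deriv ?_
  have := Gamma_pos_of_pos ha
  simp only [gammaPDFReal, if_pos ht.le, Gamma_add_one ha.ne', add_sub_cancel_right,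
    mul_rpow hr.le ht.le, rpow_add_one hr.ne', rpow_sub_one hr.ne', rpow_sub_one ht.ne',
    Function.comp_apply, Pi.neg_apply]
  field_simp
  ring

lemma cdf_gammaMeasure_sub_cdf_gammaMeasure_add_one (ha : 0 < a) (hr : 0 < r) {x : ℝ}
    (hx : 0 ≤ x) :
    cdf (gammaMeasure a r) x - cdf (gammaMeasure (a + 1) r) x =
      (r * x) ^ a * exp (-(r * x)) / Gamma (a + 1) := by
  have ha' : 0 < a + 1 := by linarith
  have hint := (integrable_gammaPDFReal ha hr).intervalIntegrable (a := 0) (b := x)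
  have hint' := (integrable_gammaPDFReal ha' hr).intervalIntegrable (a := 0) (b := x)
  have hcont : Continuous fun s => (r * s) ^ a * exp (-(r * s)) / Gamma (a + 1) := by
    have := continuous_rpow_const ha.le
    fun_prop
  rw [cdf_gammaMeasure_eq_intervalIntegral ha hr, cdf_gammaMeasure_eq_intervalIntegral ha' hr,
    ← intervalIntegral.integral_sub hint hint',
    intervalIntegral.integral_eq_sub_of_hasDerivAt_of_le hx hcont.continuousOn
      (fun t ht => hasDerivAt_rpow_mul_exp_neg_div_Gamma ha hr ht.1) (hint.sub hint')]
  simp [zero_rpow ha.ne']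

lemma cdf_gammaMeasure_sub_cdf_gammaMeasure_add_one_le (ha : 0 < a) (hr : 0 < r) (x : ℝ) :
    cdf (gammaMeasure a r) x - cdf (gammaMeasure (a + 1) r) x ≤ exp 1 / √a := by
  have ha' : 0 < a + 1 := by linarith
  refine le_trans ?_ (rpow_mul_exp_neg_div_Gamma_add_one_le ha)
  rcases le_or_gt x 0 with hx | hx
  · rw [cdf_gammaMeasure_of_nonpos ha hr hx, cdf_gammaMeasure_of_nonpos ha' hr hx, sub_self]
    have := Gamma_pos_of_pos ha'
    positivity
  · rw [cdf_gammaMeasure_sub_cdf_gammaMeasure_add_one ha hr hx.le]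
    exact div_le_div_of_nonneg_right (rpow_mul_exp_neg_le ha (by positivity))
      (Gamma_pos_of_pos ha').le

lemma abs_cdf_gammaMeasure_sub_cdf_gammaMeasure_le (ha : 0 < a) (hab : a ≤ b) (hba : b ≤ a + 1)
    (hr : 0 < r) (x : ℝ) :
    |cdf (gammaMeasure b r) x - cdf (gammaMeasure a r) x| ≤ exp 1 / √a := by
  have h₁ := cdf_gammaMeasure_le_of_le ha hab hr x
  have h₂ := cdf_gammaMeasure_le_of_le (ha.trans_le hab) hba hr x
  have h₃ := cdf_gammaMeasure_sub_cdf_gammaMeasure_add_one_le ha hr x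
  rw [abs_sub_comm, abs_of_nonneg (sub_nonneg.2 h₁)]
  linarith

end ProbabilityTheory

instance isProbabilityMeasure_chiSquared_succ (k : ℕ) : IsProbabilityMeasure (chiSquared (k + 1)) :=
  isProbabilityMeasure_gammaMeasure (by positivity) (by norm_num)

instance nullSingletonClass_chiSquared (k : ℕ) : NullSingletonClass (chiSquared k) :=
  nullSingletonClass_gammaMeasure _ _

lemma abs_cdf_chiSquared_succ_sub_cdf_chiSquared_le {k : ℕ} (hk : k ≠ 0) (x : ℝ) :
    |cdf (chiSquared (k + 1)) x - cdf (chiSquared k) x| ≤ exp 1 / √(k / 2) := by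
  have hk₀ : (0 : ℝ) < k := by positivity
  unfold chiSquared
  push_cast
  exact abs_cdf_gammaMeasure_sub_cdf_gammaMeasure_le (by positivity) (by linarith) (by linarith)
    (by norm_num) x

/-- if T_k ~ χ²_{k−1} and F_k is the χ²_k CDF, then F_k(T_k) converges in
distribution to Uniform(0,1) as k → ∞ (weak convergence: integrals of bounded continuous
functions converge). -/
theorem stmt_17 :
    ∀ f : BoundedContinuousFunction ℝ ℝ,
      Filter.Tendsto
        (fun k : ℕ =>
          ∫ x, f x ∂(Measure.map (fun x => ProbabilityTheory.cdf (chiSquared k) x)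
            (chiSquared (k - 1))))
        Filter.atTop
        (nhds (∫ x, f x ∂(volume.restrict (Set.Icc (0 : ℝ) 1)))) := by
  intro f
  rw [← tendsto_add_atTop_iff_nat 2]
  have hδ : Tendsto (fun k : ℕ => exp 1 / √((k + 1 : ℕ) / 2 : ℝ)) atTop (𝓝 0) :=
    tendsto_const_nhds.div_atTop <| tendsto_sqrt_atTop.comp <|
      (tendsto_natCast_atTop_atTop.comp (tendsto_add_atTop_nat 1)).atTop_div_const two_pos
  have key := tendsto_integral_map_sub_integral_map_of_dist_le (μ := fun k => chiSquared (k + 1))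
    (F := fun k => cdf (chiSquared (k + 2))) (G := fun k => cdf (chiSquared (k + 1)))
    isCompact_Icc (fun _ => (monotone_cdf _).measurable) (fun _ => (monotone_cdf _).measurable)
    (fun _ x => ⟨cdf_nonneg _ x, cdf_le_one _ x⟩) (fun _ x => ⟨cdf_nonneg _ x, cdf_le_one _ x⟩)
    hδ (fun k x => abs_cdf_chiSquared_succ_sub_cdf_chiSquared_le k.succ_ne_zero x) f
  simp only [map_cdf_eq_volume_restrict_Icc] at key
  exact tendsto_sub_nhds_zero_iff.1 key
end
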